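/- arXiv:1302.2018 — 2 statements merged into one kernel-verified Lean document; each statement's English description precedes it below -/
import Mathlib

section
/- Let λ ∈ [0,1/2] and let β be a real number with 0 ≤ β < 1, and set c = (1 − β)/(2(1+λ)). Then the harmonic mappings F₊(z) = z + β·conj(z) + c·z² and F₋(z) = z − β·conj(z) − c·z² both belong to the class HS_1(λ), and for every r ∈ (0,1) one has |F₊(r)| = (1 + β)r + c·r² and |F₋(r)| = (1 − β)r − c·r²; that is, the distortion bounds for HS_p(λ) with λ ∈ [0,1/2] are sharp. -/
open Complex Metric Set

/-- The polyharmonic mapping associated to coefficients `a b : ℕ → ℕ → ℂ`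
(`a n k` is the coefficient `a_{n,k}`):
`F(z) = Σ_{k=1}^p |z|^{2(k-1)} Σ_{n=1}^∞ (a_{n,k} z^n + conj(b_{n,k}) conj(z)^n)`. -/
noncomputable def polyF (p : ℕ) (a b : ℕ → ℕ → ℂ) (z : ℂ) : ℂ :=
  ∑ k ∈ Finset.Icc 1 p, ((‖z‖ : ℝ) : ℂ) ^ (2 * (k - 1)) *
    ∑' n : ℕ, if 1 ≤ n then
      a n k * z ^ n + (starRingEnd ℂ) (b n k) * ((starRingEnd ℂ) z) ^ n else 0

/-- The coefficient conditions defining the class `HS_p(λ)`. -/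
def HSLam (p : ℕ) (lam : ℝ) (a b : ℕ → ℕ → ℂ) : Prop :=
  a 1 1 = 1 ∧
  (∀ k ∈ Finset.Icc 1 p,
    Summable (fun n : ℕ => ‖a n k‖ + ‖b n k‖)) ∧
  (∀ k ∈ Finset.Icc 1 p, Summable (fun n : ℕ =>
    if 2 ≤ n then (2 * ((k : ℝ) - 1) + n * (lam * n + 1 - lam)) *
      (‖a n k‖ + ‖b n k‖) else 0)) ∧
  (∑ k ∈ Finset.Icc 1 p, ∑' n : ℕ,
      (if 2 ≤ n then (2 * ((k : ℝ) - 1) + n * (lam * n + 1 - lam)) *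
        (‖a n k‖ + ‖b n k‖) else 0))
    ≤ 2 - ∑ k ∈ Finset.Icc 1 p,
        (2 * (k : ℝ) - 1) * (‖a 1 k‖ + ‖b 1 k‖) ∧
  1 ≤ ∑ k ∈ Finset.Icc 1 p,
        (2 * (k : ℝ) - 1) * (‖a 1 k‖ + ‖b 1 k‖) ∧
  ∑ k ∈ Finset.Icc 1 p,
        (2 * (k : ℝ) - 1) * (‖a 1 k‖ + ‖b 1 k‖) < 2


/-- Coefficients of the extremal mapping `F₊(z) = z + β conj(z) + c z²`. -/
noncomputable def aPlus (c : ℝ) : ℕ → ℕ → ℂ := fun n k =>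
  if n = 1 ∧ k = 1 then 1 else if n = 2 ∧ k = 1 then (c : ℂ) else 0

noncomputable def bPlus (β : ℝ) : ℕ → ℕ → ℂ := fun n k =>
  if n = 1 ∧ k = 1 then (β : ℂ) else 0

/-- Coefficients of the extremal mapping `F₋(z) = z − β conj(z) − c z²`. -/
noncomputable def aMinus (c : ℝ) : ℕ → ℕ → ℂ := fun n k =>
  if n = 1 ∧ k = 1 then 1 else if n = 2 ∧ k = 1 then (-c : ℂ) else 0

noncomputable def bMinus (β : ℝ) : ℕ → ℕ → ℂ := fun n k =>
  if n = 1 ∧ k = 1 then (-β : ℂ) else 0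

/-! Both mappings have only three non-zero coefficients, so `polyF 1` is a finite sum, and the
coefficient condition of `HS_1(λ)` reads `2(1+λ)|c| ≤ 1 - β`, which the choice of `c` makes an
equality. Membership depends only on the moduli of the coefficients, so `F₋` inherits it from
`F₊`. On the positive axis both mappings are real, and `c r ≤ 1 - β` keeps `F₋(r)` nonnegative. -/

section Coefficients

variable {p : ℕ} {lam : ℝ} {a b a' b' : ℕ → ℕ → ℂ}

theorem HSLam.of_norm_eq (h : HSLam p lam a' b') (ha11 : a 1 1 = 1)
    (ha : ∀ n k, ‖a n k‖ = ‖a' n k‖) (hb : ∀ n k, ‖b n k‖ = ‖b' n k‖) :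
    HSLam p lam a b := by
  simp only [HSLam, ha, hb] at h ⊢
  exact ⟨ha11, h.2⟩

theorem polyF_one_of_support (ha : ∀ n, n ≠ 1 → n ≠ 2 → a n 1 = 0)
    (hb : ∀ n, n ≠ 1 → b n 1 = 0) (z : ℂ) :
    polyF 1 a b z = a 1 1 * z + starRingEnd ℂ (b 1 1) * starRingEnd ℂ z + a 2 1 * z ^ 2 := by
  rw [polyF, Finset.Icc_self, Finset.sum_singleton, tsum_eq_sum (s := {1, 2})]
  · simp [hb 2 (by norm_num)]
  · intro n hn
    simp only [Finset.mem_insert, Finset.mem_singleton, not_or] at hn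
    simp [ha n hn.1 hn.2, hb n hn.1]

end Coefficients

section Extremal

variable (lam β c : ℝ)

theorem norm_aPlus_add_norm_bPlus (n : ℕ) :
    ‖aPlus c n 1‖ + ‖bPlus β n 1‖ = if n = 1 then 1 + |β| else if n = 2 then |c| else 0 := by
  rcases eq_or_ne n 1 with rfl | h1
  · simp [aPlus, bPlus]
  rcases eq_or_ne n 2 with rfl | h2
  · simp [aPlus, bPlus]
  · simp [aPlus, bPlus, h1, h2]

theorem hsLam_aPlus_bPlus (hβ0 : 0 ≤ β) (hβ1 : β < 1) (hc : 2 * (1 + lam) * |c| ≤ 1 - β) :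
    HSLam 1 lam (aPlus c) (bPlus β) := by
  have hweighted : (fun n : ℕ => if 2 ≤ n then
        (2 * (((1 : ℕ) : ℝ) - 1) + n * (lam * n + 1 - lam)) * (‖aPlus c n 1‖ + ‖bPlus β n 1‖)
        else 0) = fun n => if n = 2 then 2 * (1 + lam) * |c| else 0 := by
    funext n
    rw [norm_aPlus_add_norm_bPlus]
    rcases eq_or_ne n 2 with rfl | h2
    · simp only [le_refl, ↓reduceIte, OfNat.ofNat_ne_one, Nat.cast_one, Nat.cast_ofNat]
      ring
    · by_cases hn : 2 ≤ n
      · simp [hn, h2, show n ≠ 1 by omega]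
      · simp [hn, h2]
  have hfirst : ∑ k ∈ Finset.Icc (1 : ℕ) 1, (2 * (k : ℝ) - 1) * (‖aPlus c 1 k‖ + ‖bPlus β 1 k‖)
      = 1 + β := by
    simp [norm_aPlus_add_norm_bPlus, abs_of_nonneg hβ0]
    ring
  refine ⟨by simp [aPlus], ?_, ?_, ?_, by rw [hfirst]; linarith, by rw [hfirst]; linarith⟩
  · simp only [Finset.Icc_self, Finset.mem_singleton, forall_eq, norm_aPlus_add_norm_bPlus]
    exact summable_of_ne_finset_zero (s := {1, 2}) fun n hn => by simp_all
  · simp only [Finset.Icc_self, Finset.mem_singleton, forall_eq, hweighted]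
    exact (hasSum_ite_eq 2 _).summable
  · rw [hfirst, Finset.Icc_self, Finset.sum_singleton, hweighted, tsum_ite_eq]
    linarith

theorem hsLam_aMinus_bMinus (hβ0 : 0 ≤ β) (hβ1 : β < 1) (hc : 2 * (1 + lam) * |c| ≤ 1 - β) :
    HSLam 1 lam (aMinus c) (bMinus β) :=
  (hsLam_aPlus_bPlus lam β c hβ0 hβ1 hc).of_norm_eq (by simp [aMinus])
    (fun n k => by unfold aMinus aPlus; split_ifs <;> simp)
    (fun n k => by unfold bMinus bPlus; split_ifs <;> simp)

theorem polyF_aPlus_bPlus (z : ℂ) :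
    polyF 1 (aPlus c) (bPlus β) z = z + (β : ℂ) * starRingEnd ℂ z + (c : ℂ) * z ^ 2 := by
  rw [polyF_one_of_support (fun n h1 h2 => by simp [aPlus, h1, h2])
    (fun n h1 => by simp [bPlus, h1])]
  simp [aPlus, bPlus]

theorem polyF_aMinus_bMinus (z : ℂ) :
    polyF 1 (aMinus c) (bMinus β) z = z - (β : ℂ) * starRingEnd ℂ z - (c : ℂ) * z ^ 2 := by
  rw [polyF_one_of_support (fun n h1 h2 => by simp [aMinus, h1, h2])
    (fun n h1 => by simp [bMinus, h1])]
  simp [aMinus, bMinus]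
  ring

end Extremal

/-- Sharpness of the distortion bounds for `HS_p(λ)`, `0 ≤ λ ≤ 1/2`: the mappings
`F₊(z) = z + β conj(z) + c z²` and `F₋(z) = z − β conj(z) − c z²`, where
`c = (1−β)/(2(1+λ))`, belong to `HS_1(λ)` and attain the bounds on `(0,1)`. -/
theorem distortion_bounds_sharp
    (lam β c : ℝ) (hlam : lam ∈ Set.Icc (0 : ℝ) (1 / 2))
    (hβ0 : 0 ≤ β) (hβ1 : β < 1) (hc : c = (1 - β) / (2 * (1 + lam))) :
    HSLam 1 lam (aPlus c) (bPlus β) ∧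
    HSLam 1 lam (aMinus c) (bMinus β) ∧
    (∀ z ∈ Metric.ball (0 : ℂ) 1,
      polyF 1 (aPlus c) (bPlus β) z = z + (β : ℂ) * (starRingEnd ℂ) z + (c : ℂ) * z ^ 2 ∧
      polyF 1 (aMinus c) (bMinus β) z = z - (β : ℂ) * (starRingEnd ℂ) z - (c : ℂ) * z ^ 2) ∧
    (∀ r : ℝ, 0 < r → r < 1 →
      ‖(r : ℂ) + (β : ℂ) * (starRingEnd ℂ) (r : ℂ) + (c : ℂ) * (r : ℂ) ^ 2‖
        = (1 + β) * r + c * r ^ 2 ∧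
      ‖(r : ℂ) - (β : ℂ) * (starRingEnd ℂ) (r : ℂ) - (c : ℂ) * (r : ℂ) ^ 2‖
        = (1 - β) * r - c * r ^ 2) := by
  have hpos : 0 < 2 * (1 + lam) := by linarith [hlam.1]
  have hc0 : 0 ≤ c := hc ▸ div_nonneg (by linarith) hpos.le
  have hcoef : 2 * (1 + lam) * |c| = 1 - β := by
    rw [abs_of_nonneg hc0, hc, mul_div_cancel₀ _ hpos.ne']
  refine ⟨hsLam_aPlus_bPlus lam β c hβ0 hβ1 hcoef.le, hsLam_aMinus_bMinus lam β c hβ0 hβ1 hcoef.le,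
    fun z _ => ⟨polyF_aPlus_bPlus β c z, polyF_aMinus_bMinus β c z⟩, fun r hr0 hr1 => ?_⟩
  have hcr : c * r ≤ 1 - β := by
    rw [abs_of_nonneg hc0] at hcoef
    nlinarith [hlam.1]
  rw [Complex.conj_ofReal]
  constructor
  · rw [← Complex.norm_of_nonneg (r := (1 + β) * r + c * r ^ 2) (by positivity)]
    push_cast
    ring_nf
  · rw [← Complex.norm_of_nonneg (r := (1 - β) * r - c * r ^ 2) (by nlinarith)]
    push_cast
    ring_nf
end

section
/- Let p ≥ 2 be an integer, λ ∈ (1/2, 1], and let F be a polyharmonic mapping of class HS_p(λ) with coefficients a_{n,k}, b_{n,k}. Then Σ_{k=1}^p Σ_{n=2}^∞ (|a_{n,k}| + |b_{n,k}|) + Σ_{k=3}^p (|a_{1,k}| + |b_{1,k}|) ≤ (1 − |b_{1,1}| − 3(|a_{1,2}| + |b_{1,2}|))/(2(1+λ)). -/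
open Complex Metric Set

/-
Every weight in the defining inequality of `HS_p(λ)` is at least `2(1 + λ)` except those of
`a_{1,1}, b_{1,1}` (weight 1) and `a_{1,2}, b_{1,2}` (weight 3): for `n ≥ 2` one has
`2(k - 1) + n(λn + 1 - λ) - 2(1 + λ) = 2(k - 1) + (n - 2)(λn + λ + 1) ≥ 0`, and for `k ≥ 3` one has
`2k - 1 ≥ 5 > 2(1 + λ)`. Multiplying the left-hand side by `2(1 + λ)` therefore bounds it by
`2 - (1 + |b_{1,1}|) - 3(|a_{1,2}| + |b_{1,2}|)`, using `a_{1,1} = 1`.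
-/

lemma two_mul_one_add_le_weight {lam : ℝ} (hlam : 0 ≤ lam) {k n : ℕ} (hk : 1 ≤ k)
    (hn : 2 ≤ n) : 2 * (1 + lam) ≤ 2 * ((k : ℝ) - 1) + n * (lam * n + 1 - lam) := by
  have hk : (1 : ℝ) ≤ k := by exact_mod_cast hk
  have hn : (2 : ℝ) ≤ n := by exact_mod_cast hn
  nlinarith [mul_nonneg (sub_nonneg.mpr hn) (by positivity : (0 : ℝ) ≤ lam * n + lam + 1)]

lemma mul_tsum_ite_le_tsum_ite_mul {ι : Type*} {P : ι → Prop} [DecidablePred P]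
    {c w : ι → ℝ} {m : ℝ} (hc : ∀ i, 0 ≤ c i) (hcs : Summable c)
    (hws : Summable fun i => if P i then w i * c i else 0) (hw : ∀ i, P i → m ≤ w i) :
    m * ∑' i, (if P i then c i else 0) ≤ ∑' i, if P i then w i * c i else 0 := by
  have hPcs : Summable fun i => if P i then c i else 0 :=
    hcs.of_nonneg_of_le (fun i => by split_ifs <;> simp [hc i])
      (fun i => by split_ifs <;> simp [hc i])
  rw [← tsum_mul_left]
  refine hPcs.mul_left m |>.tsum_le_tsum (fun i => ?_) hws
  split_ifs with hi
  · exact mul_le_mul_of_nonneg_right (hw i hi) (hc i)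
  · simp

lemma sum_Icc_one_eq_add_add_sum_Icc_three {M : Type*} [AddCommMonoid M] (f : ℕ → M) {p : ℕ}
    (hp : 2 ≤ p) : ∑ k ∈ Finset.Icc 1 p, f k = f 1 + f 2 + ∑ k ∈ Finset.Icc 3 p, f k := by
  have hIoc (m : ℕ) : Finset.Ioc m p = Finset.Icc (m + 1) p :=
    (Finset.Icc_add_one_left_eq_Ioc m p).symm
  rw [← Finset.add_sum_Ioc_eq_sum_Icc (by omega : 1 ≤ p), hIoc, ← Finset.add_sum_Ioc_eq_sum_Icc hp,
    hIoc, add_assoc]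

/-- Coefficient bound for `F ∈ HS_p(λ)` with `1/2 < λ ≤ 1` and `p ≥ 2`. -/
theorem coefficient_sum_bound_large_lambda
    (p : ℕ) (hp : 2 ≤ p) (lam : ℝ) (hlam : lam ∈ Set.Ioc (1 / 2 : ℝ) 1)
    (a b : ℕ → ℕ → ℂ) (hF : HSLam p lam a b) :
    ∑ k ∈ Finset.Icc 1 p, ∑' n : ℕ,
        (if 2 ≤ n then ‖a n k‖ + ‖b n k‖ else 0)
      + ∑ k ∈ Finset.Icc 3 p, (‖a 1 k‖ + ‖b 1 k‖)
      ≤ (1 - ‖b 1 1‖ - 3 * (‖a 1 2‖ + ‖b 1 2‖))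
          / (2 * (1 + lam)) := by
  obtain ⟨ha11, hsum, hwsum, hineq, -, -⟩ := hF
  obtain ⟨hlam_pos, hlam_le⟩ := hlam
  have hhigher : 2 * (1 + lam) * ∑ k ∈ Finset.Icc 1 p, ∑' n : ℕ,
      (if 2 ≤ n then ‖a n k‖ + ‖b n k‖ else 0) ≤
      ∑ k ∈ Finset.Icc 1 p, ∑' n : ℕ, (if 2 ≤ n then (2 * ((k : ℝ) - 1) +
        n * (lam * n + 1 - lam)) * (‖a n k‖ + ‖b n k‖) else 0) := by
    rw [Finset.mul_sum]
    refine Finset.sum_le_sum fun k hk => mul_tsum_ite_le_tsum_ite_mul (fun n => by positivity)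
      (hsum k hk) (hwsum k hk) fun n hn => two_mul_one_add_le_weight (by linarith) ?_ hn
    exact (Finset.mem_Icc.mp hk).1
  have htail : 2 * (1 + lam) * ∑ k ∈ Finset.Icc 3 p, (‖a 1 k‖ + ‖b 1 k‖) ≤
      ∑ k ∈ Finset.Icc 3 p, (2 * (k : ℝ) - 1) * (‖a 1 k‖ + ‖b 1 k‖) := by
    rw [Finset.mul_sum]
    gcongr with k hk
    have hk : (3 : ℝ) ≤ k := by exact_mod_cast (Finset.mem_Icc.mp hk).1
    linarith
  have hfirst : ∑ k ∈ Finset.Icc 1 p, (2 * (k : ℝ) - 1) * (‖a 1 k‖ + ‖b 1 k‖) =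
      1 + ‖b 1 1‖ + 3 * (‖a 1 2‖ + ‖b 1 2‖) +
        ∑ k ∈ Finset.Icc 3 p, (2 * (k : ℝ) - 1) * (‖a 1 k‖ + ‖b 1 k‖) := by
    rw [sum_Icc_one_eq_add_add_sum_Icc_three _ hp, ha11]
    norm_num
  rw [le_div_iff₀ (by positivity)]
  linarith
end
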